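/- arXiv:2011.07621 — 3 statements merged into one kernel-verified Lean document; each statement's English description precedes it below -/
import Mathlib

section
/- Let G be an undirected graph. If every connected component of G is either trivial (a single vertex with no loop) or a complete graph with loops on all its vertices, then the graph algebra A(G) satisfies every bracketing identity; consequently, the associative spectrum satisfies s_n(A(G)) = 1 for all n ≥ 1. -/
namespace AssocSpec

/-- Bracketings of products `x₁ x₂ ⋯ xₙ` represented as binary trees whose
leaves, read from left to right, are the variables `x₁, …, xₙ`. -/
inductive BTree : Type
  | leaf : BTree
  | node : BTree → BTree → BTree

namespace BTree

/-- The size of a bracketing: its number of variables (leaves). -/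
def size : BTree → ℕ
  | leaf => 1
  | node l r => l.size + r.size

/-- Evaluate a bracketing in a magma `(A, op)`, the leaves taking the values
`f k, f (k+1), …` from left to right. -/
def evalFrom {A : Type*} (op : A → A → A) : BTree → (ℕ → A) → ℕ → A
  | leaf, f, k => f k
  | node l r, f, k => op (evalFrom op l f k) (evalFrom op r f (k + l.size))

/-- The term operation induced by a bracketing `t` on a magma `(A, op)`;
the `i`-th variable (0-indexed) takes the value `f i`. -/
def termOp {A : Type*} (op : A → A → A) (t : BTree) (f : ℕ → A) : A :=
  evalFrom op t f 0

/-- The depth sequence of the DFS tree `G(t)` of a bracketing `t`: the `i`-th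
entry is the depth of the `i`-th variable (0-indexed) in `G(t)`. -/
def depths : BTree → List ℕ
  | leaf => [0]
  | node l r => l.depths ++ r.depths.map (· + 1)

/-- The depth of the `i`-th variable (0-indexed) in the DFS tree `G(t)`. -/
def depth (t : BTree) (i : ℕ) : ℕ := t.depths.getD i 0

/-- The height of the DFS tree `G(t)`: the maximum depth of a variable. -/
def height (t : BTree) : ℕ := t.depths.foldr max 0

/-- The edges of the DFS tree `G(t)`, the variables being indexed from the
given offset: `(p, c)` is an edge iff `x_p` is the parent of `x_c`. -/
def edgesFrom : BTree → ℕ → List (ℕ × ℕ)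
  | leaf, _ => []
  | node l r, k => (k, k + l.size) :: (l.edgesFrom k ++ r.edgesFrom (k + l.size))

/-- The edges of the DFS tree `G(t)` (variables indexed from `0`). -/
def edges (t : BTree) : List (ℕ × ℕ) := t.edgesFrom 0

end BTree

open Classical in
/-- The operation of the graph algebra of the digraph with vertex set `V` and
edge relation `E`; `none` plays the role of `∞`. -/
noncomputable def gaOp {V : Type*} (E : V → V → Prop) :
    Option V → Option V → Option V
  | some x, some y => if E x y then some x else none
  | _, _ => none

/-- The magma `(A, op)` satisfies the bracketing identity `t ≈ t'`. -/
def Satisfies {A : Type*} (op : A → A → A) (t t' : BTree) : Prop :=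
  ∀ f : ℕ → A, BTree.termOp op t f = BTree.termOp op t' f

/-- The `n`-th member `s_n` of the associative spectrum of the magma `(A, op)`:
the number of distinct term operations induced by bracketings of size `n`. -/
noncomputable def spectrum {A : Type*} (op : A → A → A) (n : ℕ) : ℕ :=
  Set.ncard {g : (ℕ → A) → A | ∃ t : BTree, t.size = n ∧ g = BTree.termOp op t}

/-- Reachability (by a walk) in the digraph with edge relation `E`. -/
def Reach {V : Type*} (E : V → V → Prop) : V → V → Prop :=
  Relation.ReflTransGen E

/-- `u` and `v` lie in the same strongly connected component. -/
def SameSCC {V : Type*} (E : V → V → Prop) (u v : V) : Prop :=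
  Reach E u v ∧ Reach E v u

/-- The strongly connected component of `v`, as a set of vertices. -/
def scc {V : Type*} (E : V → V → Prop) (v : V) : Set V :=
  {u | SameSCC E u v}

/-- `v` lies in a nontrivial strongly connected component (one carrying at
least one edge), i.e. `v` lies on a closed walk of positive length. -/
def InNontrivialSCC {V : Type*} (E : V → V → Prop) (v : V) : Prop :=
  ∃ u, E v u ∧ Reach E u v

/-- The induced subgraph on the set `K` (with the edge relation `E`) is an
`m`-whirl: `K` is partitioned into blocks `B 0, …, B (m-1)` so that edges go
exactly from each block to the cyclically next one. -/
def IsWhirlOn {V : Type*} (E : V → V → Prop) (K : Set V) (m : ℕ) : Prop :=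
  ∃ B : ZMod m → Set V,
    (∀ i, (B i).Nonempty) ∧
    (∀ i, B i ⊆ K) ∧
    (∀ x ∈ K, ∃! i, x ∈ B i) ∧
    (∀ x ∈ K, ∀ y ∈ K, (E x y ↔ ∃ i, x ∈ B i ∧ y ∈ B (i + 1)))

/-- `p 0 → p 1 → ⋯ → p len` is a path (a walk with pairwise distinct
vertices) in the digraph with edge relation `E`. -/
def IsPath {V : Type*} (E : V → V → Prop) (len : ℕ) (p : ℕ → V) : Prop :=
  (∀ i < len, E (p i) (p (i + 1))) ∧
  (∀ i ≤ len, ∀ j ≤ len, p i = p j → i = j)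

/-- The walk `p 0 → ⋯ → p len` is pleasant: all its vertices belong to
trivial strongly connected components. -/
def IsPleasant {V : Type*} (E : V → V → Prop) (len : ℕ) (p : ℕ → V) : Prop :=
  ∀ i ≤ len, ¬ InNontrivialSCC E (p i)

/-- The connected component `K` (of an undirected graph) is complete
bipartite: it splits into two nonempty parts with edges exactly between
vertices of different parts. -/
def IsCompleteBipartiteOn {V : Type*} (E : V → V → Prop) (K : Set V) : Prop :=
  ∃ B1 B2 : Set V, B1.Nonempty ∧ B2.Nonempty ∧ B1 ∪ B2 = K ∧ B1 ∩ B2 = ∅ ∧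
    ∀ x ∈ K, ∀ y ∈ K, (E x y ↔ (x ∈ B1 ∧ y ∈ B2) ∨ (x ∈ B2 ∧ y ∈ B1))

/-- A DFS tree of size `n`: a rooted directed tree on the vertices
`x₁, …, xₙ` (here `Fin n`, the root being `0`), given by its parent function,
such that the parent of every non-root vertex precedes it and the vertex set
of the induced subtree rooted at any vertex `i` is an interval `[i, i']`.
(The parent of the root is, by convention, the root itself.) -/
structure DFSTree (n : ℕ) where
  parent : Fin n → Fin n
  parent_lt : ∀ i : Fin n, 0 < (i : ℕ) → (parent i : ℕ) < (i : ℕ)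
  parent_root : ∀ i : Fin n, (i : ℕ) = 0 → parent i = i
  interval : ∀ i j k : Fin n, i ≤ j → j ≤ k →
    (∃ a : ℕ, parent^[a] k = i) → (∃ a : ℕ, parent^[a] j = i)

/-- The depth of the vertex `i` in a DFS tree: the length of the path from
the root to `i`. -/
noncomputable def DFSTree.depth {n : ℕ} (T : DFSTree n) (i : Fin n) : ℕ :=
  sInf {k : ℕ | (T.parent^[k] i : ℕ) = 0}

/-- The height of a DFS tree: the maximum depth of a vertex. -/
noncomputable def DFSTree.height {n : ℕ} (T : DFSTree n) : ℕ :=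
  Finset.univ.sup fun i => T.depth i

/-- The vertex `i` is a leaf (childless vertex) of the DFS tree `T`. -/
def DFSTree.IsLeaf {n : ℕ} (T : DFSTree n) (i : Fin n) : Prop :=
  ∀ j : Fin n, T.parent j = i → j = i

/-- `t_h(n)`: the number of DFS trees of size `n` of height at most `h`. -/
noncomputable def tcount (h n : ℕ) : ℕ :=
  Nat.card {T : DFSTree n // T.height ≤ h}

/-- `d` is a zag sequence: `d₁ = 0`, `d₂ = 1`, and
`1 ≤ d_{i+1} ≤ d_i + 1` for all `i` (1-indexed as in the paper;
here `d : Fin n → ℕ` is 0-indexed). -/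
def IsZag {n : ℕ} (d : Fin n → ℕ) : Prop :=
  (∀ h : 0 < n, d ⟨0, h⟩ = 0) ∧
  (∀ h : 1 < n, d ⟨1, h⟩ = 1) ∧
  (∀ i : ℕ, ∀ h : i + 1 < n,
    1 ≤ d ⟨i + 1, h⟩ ∧ d ⟨i + 1, h⟩ ≤ d ⟨i, Nat.lt_of_succ_lt h⟩ + 1)

/-- `M(t,t')`: the largest `m` such that the depth sequences of the DFS trees
of the bracketings `t` and `t'` are congruent modulo `m`. -/
noncomputable def Mval (t t' : BTree) : ℕ :=
  sSup {m : ℕ | ∀ i < t.size, t.depth i ≡ t'.depth i [MOD m]}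

end AssocSpec
namespace AssocSpecAux
open AssocSpec

/-- Pairwise-edge predicate on `Option V`. -/
def P2 {V : Type*} (E : V → V → Prop) (a b : Option V) : Prop :=
  ∃ x y, a = some x ∧ b = some y ∧ E x y

open Classical in
lemma gaOp_some_some {V : Type*} (E : V → V → Prop) (x y : V) :
    gaOp E (some x) (some y) = if E x y then some x else none := rfl

lemma gaOp_none_right {V : Type*} (E : V → V → Prop) (a : Option V) :
    gaOp E a none = none := by cases a <;> rfl

lemma gaOp_none_left {V : Type*} (E : V → V → Prop) (a : Option V) :
    gaOp E none a = none := by cases a <;> rfl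

lemma size_pos (t : BTree) : 1 ≤ t.size := by
  induction t with
  | leaf => exact le_refl 1
  | node l r ihl ihr => simpa [BTree.size] using Nat.le_add_right_of_le ihl

lemma size_eq_one {t : BTree} (h : t.size = 1) : t = .leaf := by
  cases t with
  | leaf => rfl
  | node l r =>
    exfalso
    have h1 := size_pos l
    have h2 := size_pos r
    simp [BTree.size] at h
    omega

lemma etrans {V : Type*} {E : V → V → Prop}
    (hsymm : ∀ u v, E u v → E v u)
    (hcomp : ∀ v : V,
      (scc E v = {v} ∧ ¬ E v v) ∨
      (∀ x ∈ scc E v, ∀ y ∈ scc E v, E x y))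
    {x y z : V} (hxy : E x y) (hyz : E y z) : E x z := by
  have hyx := hsymm _ _ hxy
  have hzy := hsymm _ _ hyz
  rcases hcomp x with ⟨hscc, hloop⟩ | hfull
  · exfalso
    have hy : y ∈ scc E x :=
      ⟨Relation.ReflTransGen.single hyx, Relation.ReflTransGen.single hxy⟩
    rw [hscc] at hy
    rcases hy with rfl
    exact hloop hxy
  · have hx : x ∈ scc E x := ⟨Relation.ReflTransGen.refl, Relation.ReflTransGen.refl⟩
    have hz : z ∈ scc E x :=
      ⟨(Relation.ReflTransGen.single hzy).trans (Relation.ReflTransGen.single hyx),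
       (Relation.ReflTransGen.single hxy).trans (Relation.ReflTransGen.single hyz)⟩
    exact hfull x hx z hz

/-- Lemma A: if all values in the range are pairwise `E`-related, the
evaluation returns the leftmost value. -/
lemma evalA {V : Type*} (E : V → V → Prop) (t : BTree) :
    ∀ (f : ℕ → Option V) (k : ℕ),
      (∀ i < t.size, ∀ j < t.size, P2 E (f (k + i)) (f (k + j))) →
      BTree.evalFrom (gaOp E) t f k = f k := by
  induction t with
  | leaf => intro f k _; rfl
  | node l r ihl ihr =>
    intro f k hP
    have hls := size_pos l
    have hrs := size_pos r
    have hl : BTree.evalFrom (gaOp E) l f k = f k := by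
      refine ihl f k fun i hi j hj => hP i ?_ j ?_ <;> simp [BTree.size] <;> omega
    have hr : BTree.evalFrom (gaOp E) r f (k + l.size) = f (k + l.size) := by
      refine ihr f (k + l.size) fun i hi j hj => ?_
      have := hP (l.size + i) (by simp [BTree.size]; omega) (l.size + j)
        (by simp [BTree.size]; omega)
      simpa [Nat.add_assoc] using this
    have hP0 := hP 0 (by simp [BTree.size]; omega) l.size (by simp [BTree.size]; omega)
    simp only [Nat.add_zero] at hP0
    obtain ⟨x, y, hx, hy, hE⟩ := hP0
    simp [BTree.evalFrom, hl, hr, hx, hy, gaOp_some_some, hE]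
lemma gaOp_ne_none {V : Type*} {E : V → V → Prop} {a b : Option V}
    (h : gaOp E a b ≠ none) : ∃ x y, a = some x ∧ b = some y ∧ E x y := by
  cases a with
  | none => exact absurd (gaOp_none_left E b) h
  | some x =>
    cases b with
    | none => exact absurd (gaOp_none_right E _) h
    | some y =>
      refine ⟨x, y, rfl, rfl, ?_⟩
      by_contra hxy
      exact h (by simp [gaOp_some_some, hxy])

/-- Lemma B: if some pair fails, the evaluation of a nontrivial bracketing
returns `∞`. -/
lemma evalB {V : Type*} {E : V → V → Prop}
    (hsymm : ∀ u v, E u v → E v u)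
    (hcomp : ∀ v : V,
      (scc E v = {v} ∧ ¬ E v v) ∨
      (∀ x ∈ scc E v, ∀ y ∈ scc E v, E x y))
    (t : BTree) :
    ∀ (f : ℕ → Option V) (k : ℕ), 2 ≤ t.size →
      ¬ (∀ i < t.size, ∀ j < t.size, P2 E (f (k + i)) (f (k + j))) →
      BTree.evalFrom (gaOp E) t f k = none := by
  have tr : ∀ {a b c : V}, E a b → E b c → E a c :=
    fun hab hbc => etrans hsymm hcomp hab hbc
  induction t with
  | leaf => intro f k h2 _; simp [BTree.size] at h2
  | node l r ihl ihr =>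
    intro f k _ hP
    have hls := size_pos l
    have hrs := size_pos r
    have hn : (BTree.node l r).size = l.size + r.size := rfl
    by_contra hne
    rw [BTree.evalFrom] at hne
    obtain ⟨x, y, ha, hb, hxy⟩ := gaOp_ne_none hne
    have hxx : E x x := tr hxy (hsymm _ _ hxy)
    have hyy : E y y := tr (hsymm _ _ hxy) hxy
    -- the left subrange is fully related
    have hPl : ∀ i < l.size, ∀ j < l.size, P2 E (f (k + i)) (f (k + j)) := by
      by_contra hPl
      rcases Nat.lt_or_ge l.size 2 with h1 | h2
      · have : l.size = 1 := by omega
        have hleaf := size_eq_one this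
        subst hleaf
        apply hPl
        intro i hi j hj
        simp only [BTree.size] at hi hj
        have hi0 : i = 0 := by omega
        have hj0 : j = 0 := by omega
        subst hi0; subst hj0
        have : f (k + 0) = some x := by simpa [BTree.evalFrom] using ha
        exact ⟨x, x, this, this, hxx⟩
      · rw [ihl f k h2 hPl] at ha; exact (Option.some_ne_none x ha.symm).elim
    have hPr : ∀ i < r.size, ∀ j < r.size,
        P2 E (f (k + l.size + i)) (f (k + l.size + j)) := by
      by_contra hPr
      rcases Nat.lt_or_ge r.size 2 with h1 | h2
      · have : r.size = 1 := by omega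
        have hleaf := size_eq_one this
        subst hleaf
        apply hPr
        intro i hi j hj
        simp only [BTree.size] at hi hj
        have hi0 : i = 0 := by omega
        have hj0 : j = 0 := by omega
        subst hi0; subst hj0
        have : f (k + l.size + 0) = some y := by simpa [BTree.evalFrom] using hb
        exact ⟨y, y, this, this, hyy⟩
      · rw [ihr f (k + l.size) h2 hPr] at hb
        exact (Option.some_ne_none y hb.symm).elim
    have hfk : f k = some x := by rw [← evalA E l f k hPl]; exact ha
    have hfk' : f (k + l.size) = some y := by
      rw [← evalA E r f (k + l.size) hPr]; exact hb
    apply hP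
    have hleft : ∀ i < l.size, ∃ v, f (k + i) = some v ∧ E v x := by
      intro i hi
      obtain ⟨v, w, hv, hw, hvw⟩ := hPl i hi 0 (by omega)
      rw [Nat.add_zero, hfk] at hw
      injection hw with hw
      subst hw
      exact ⟨v, hv, hvw⟩
    have hright : ∀ i < r.size, ∃ v, f (k + l.size + i) = some v ∧ E v y := by
      intro i hi
      obtain ⟨v, w, hv, hw, hvw⟩ := hPr i hi 0 (by omega)
      rw [Nat.add_zero, hfk'] at hw
      injection hw with hw
      subst hw
      exact ⟨v, hv, hvw⟩
    have hall : ∀ i < l.size + r.size, ∃ v, f (k + i) = some v ∧ E v x := by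
      intro i hi
      by_cases hil : i < l.size
      · exact hleft i hil
      · obtain ⟨v, hv, hvy⟩ := hright (i - l.size) (by omega)
        refine ⟨v, ?_, tr hvy (hsymm _ _ hxy)⟩
        rw [← hv]
        congr 1
        omega
    intro i hi j hj
    rw [hn] at hi hj
    obtain ⟨vi, hvi, hvix⟩ := hall i hi
    obtain ⟨vj, hvj, hvjx⟩ := hall j hj
    exact ⟨vi, vj, hvi, hvj, tr hvix (hsymm _ _ hvjx)⟩

open Classical in
/-- The evaluation of a bracketing depends only on its size. -/
lemma key {V : Type*} {E : V → V → Prop}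
    (hsymm : ∀ u v, E u v → E v u)
    (hcomp : ∀ v : V,
      (scc E v = {v} ∧ ¬ E v v) ∨
      (∀ x ∈ scc E v, ∀ y ∈ scc E v, E x y))
    (t : BTree) (f : ℕ → Option V) (k : ℕ) :
    BTree.evalFrom (gaOp E) t f k =
      if (∀ i < t.size, ∀ j < t.size, P2 E (f (k + i)) (f (k + j))) then f k
      else if t.size = 1 then f k else none := by
  by_cases hP : ∀ i < t.size, ∀ j < t.size, P2 E (f (k + i)) (f (k + j))
  · rw [if_pos hP]; exact evalA E t f k hP
  · rw [if_neg hP]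
    by_cases h1 : t.size = 1
    · rw [if_pos h1, size_eq_one h1]; rfl
    · rw [if_neg h1]
      exact evalB hsymm hcomp t f k (by have := size_pos t; omega) hP

/-- The left comb bracketing, of size `m + 1`. -/
def comb : ℕ → BTree
  | 0 => .leaf
  | m + 1 => .node (comb m) .leaf

lemma comb_size (m : ℕ) : (comb m).size = m + 1 := by
  induction m with
  | zero => rfl
  | succ m ih => simp [comb, BTree.size, ih]

end AssocSpecAux

open AssocSpecAux
open AssocSpec in
/-- If every connected component of an undirected graph `G` is
either trivial (a single vertex with no loop) or a complete graph with loops,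
then the graph algebra `A(G)` satisfies every bracketing identity, and
`s_n(A(G)) = 1` for all `n ≥ 1`. -/
theorem stmt0 {V : Type*} [Nonempty V] (E : V → V → Prop)
    (hsymm : ∀ u v, E u v → E v u)
    (hcomp : ∀ v : V,
      (scc E v = {v} ∧ ¬ E v v) ∨
      (∀ x ∈ scc E v, ∀ y ∈ scc E v, E x y)) :
    (∀ t t' : BTree, t.size = t'.size → Satisfies (gaOp E) t t') ∧
    (∀ n : ℕ, 1 ≤ n → spectrum (gaOp E) n = 1) := by
  have hsat : ∀ t t' : BTree, t.size = t'.size → Satisfies (gaOp E) t t' := by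
    intro t t' hsize f
    unfold BTree.termOp
    rw [key hsymm hcomp, key hsymm hcomp, hsize]
  refine ⟨hsat, ?_⟩
  intro n hn
  have hS : {g : (ℕ → Option V) → Option V |
      ∃ t : BTree, t.size = n ∧ g = BTree.termOp (gaOp E) t} =
      {BTree.termOp (gaOp E) (comb (n - 1))} := by
    ext g
    simp only [Set.mem_setOf_eq, Set.mem_singleton_iff]
    constructor
    · rintro ⟨t, ht, rfl⟩
      funext f
      exact hsat t (comb (n - 1)) (by rw [ht, comb_size]; omega) f
    · rintro rfl
      exact ⟨comb (n - 1), by rw [comb_size]; omega, rfl⟩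
  rw [AssocSpec.spectrum, hS, Set.ncard_singleton]
end

section
/- Let G be an undirected graph such that every connected component of G is either trivial (a single vertex with no loop), a complete graph with loops on all its vertices, or a complete bipartite graph, and at least one component is complete bipartite. Then the graph algebra A(G) satisfies a bracketing identity t ≈ t' (with t, t' ∈ B_n) if and only if d_{G(t)}(x_i) ≡ d_{G(t')}(x_i) (mod 2) for all i ∈ {1,…,n}; consequently, s_n(A(G)) = 2^{n−2} for all n ≥ 2. -/
namespace AssocSpec
namespace BTree

lemma size_pos (t : BTree) : 0 < t.size := by
  induction t with
  | leaf => simp [size]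
  | node l r ihl ihr => simp only [size]; omega

lemma depths_length (t : BTree) : t.depths.length = t.size := by
  induction t with
  | leaf => simp [size, depths]
  | node l r ihl ihr => simp [size, depths, ihl, ihr]

lemma depths_cons : ∀ t : BTree, ∃ l, t.depths = 0 :: l
  | leaf => ⟨[], rfl⟩
  | node l r => by
      obtain ⟨xs, h⟩ := depths_cons l
      exact ⟨xs ++ r.depths.map (· + 1), by simp [depths, h]⟩

lemma depth_zero (t : BTree) : t.depth 0 = 0 := by
  obtain ⟨xs, h⟩ := depths_cons t
  simp [depth, h]

lemma depth_one : ∀ t : BTree, 2 ≤ t.size → t.depth 1 = 1 := by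
  intro t
  induction t with
  | leaf => simp [size]
  | node l r ihl ihr =>
    intro _
    cases l with
    | leaf =>
      obtain ⟨xs, h⟩ := depths_cons r
      simp [depth, depths, h]
    | node a b =>
      have h2 : 2 ≤ (node a b).size := by
        have := size_pos a; have := size_pos b; simp only [size]; omega
      have hlen : 1 < (node a b).depths.length := by rw [depths_length]; omega
      have := ihl h2
      simp only [depth, depths] at *
      rw [List.getD_append _ _ _ _ hlen]
      exact this

lemma eq_leaf_of_size_eq_one : ∀ t : BTree, t.size = 1 → t = leaf := by
  intro t h
  cases t with
  | leaf => rfl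
  | node l r =>
    have := size_pos l; have := size_pos r
    simp only [size] at h; omega

lemma getD_map_succ (l : List ℕ) (i : ℕ) (h : i < l.length) :
    (l.map (· + 1)).getD i 0 = l.getD i 0 + 1 := by
  rw [List.getD_eq_getElem _ _ (by simpa using h), List.getD_eq_getElem _ _ h,
    List.getElem_map]

lemma edge_spec : ∀ (t : BTree) (k p c : ℕ), (p, c) ∈ t.edgesFrom k →
    k ≤ p ∧ p < c ∧ c < k + t.size ∧ t.depth (c - k) = t.depth (p - k) + 1 := by
  intro t
  induction t with
  | leaf => intro k p c hm; simp [edgesFrom] at hm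
  | node l r ihl ihr =>
    intro k p c hm
    have hls := size_pos l; have hrs := size_pos r
    simp only [edgesFrom, List.mem_cons, List.mem_append] at hm
    rcases hm with heq | hm | hm
    · injection heq with h1 h2
      refine ⟨by omega, by omega, by simp only [size]; omega, ?_⟩
      have e1 : c - k = l.size := by omega
      have e2 : p - k = 0 := by omega
      rw [e1, e2]
      obtain ⟨xs, hx⟩ := depths_cons r
      obtain ⟨ys, hy⟩ := depths_cons l
      have hll : l.depths.length = l.size := depths_length l
      simp only [depth, depths]
      rw [List.getD_append_right _ _ _ _ (by omega),
        List.getD_append _ _ _ _ (by omega), hll, Nat.sub_self]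
      simp [hx, hy]
    · obtain ⟨h1, h2, h3, h4⟩ := ihl k p c hm
      refine ⟨h1, h2, by simp only [size]; omega, ?_⟩
      have hll : l.depths.length = l.size := depths_length l
      simp only [depth, depths]
      rw [List.getD_append _ _ _ _ (by omega), List.getD_append _ _ _ _ (by omega)]
      exact h4
    · obtain ⟨h1, h2, h3, h4⟩ := ihr (k + l.size) p c hm
      refine ⟨by omega, h2, by simp only [size]; omega, ?_⟩
      have hll : l.depths.length = l.size := depths_length l
      have hrl : r.depths.length = r.size := depths_length r
      simp only [depth, depths]
      rw [List.getD_append_right _ _ _ _ (by omega),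
        List.getD_append_right _ _ _ _ (by omega)]
      have e1 : c - k - l.depths.length = c - (k + l.size) := by omega
      have e2 : p - k - l.depths.length = p - (k + l.size) := by omega
      rw [e1, e2, getD_map_succ _ _ (by omega), getD_map_succ _ _ (by omega)]
      simp only [depth] at h4
      omega

lemma parent_exists : ∀ (t : BTree) (k c : ℕ), k < c → c < k + t.size →
    ∃ p, (p, c) ∈ t.edgesFrom k := by
  intro t
  induction t with
  | leaf => intro k c h1 h2; simp [size] at h2; omega
  | node l r ihl ihr =>
    intro k c h1 h2
    have hls := size_pos l; have hrs := size_pos r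
    simp only [size] at h2
    rcases lt_trichotomy c (k + l.size) with hc | hc | hc
    · obtain ⟨p, hp⟩ := ihl k c h1 hc
      exact ⟨p, by simp [edgesFrom, hp]⟩
    · exact ⟨k, by simp [edgesFrom, hc]⟩
    · obtain ⟨p, hp⟩ := ihr (k + l.size) c hc (by omega)
      exact ⟨p, by simp [edgesFrom, hp]⟩

end BTree

open BTree

/-- Evaluation of a term of a graph algebra gives the leftmost variable iff
the assignment is defined and a graph homomorphism, `∞` otherwise. -/
def Ok {V : Type*} (E : V → V → Prop) (t : BTree) (f : ℕ → Option V) (k : ℕ) : Prop :=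
  (∀ i, k ≤ i → i < k + t.size → f i ≠ none) ∧
  (∀ p c : ℕ, (p, c) ∈ t.edgesFrom k → ∃ x y, f p = some x ∧ f c = some y ∧ E x y)

open Classical in
lemma gaOp_some_some {V : Type*} (E : V → V → Prop) (x y : V) :
    gaOp E (some x) (some y) = if E x y then some x else none := rfl

lemma gaOp_none_left {V : Type*} (E : V → V → Prop) (b : Option V) :
    gaOp E none b = none := by cases b <;> rfl

lemma gaOp_none_right {V : Type*} (E : V → V → Prop) (a : Option V) :
    gaOp E a none = none := by cases a <;> rfl

open Classical in
lemma evalFrom_eq {V : Type*} (E : V → V → Prop) :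
    ∀ (t : BTree) (f : ℕ → Option V) (k : ℕ),
      evalFrom (gaOp E) t f k = if Ok E t f k then f k else none := by
  classical
  intro t
  induction t with
  | leaf =>
    intro f k
    by_cases h : f k = none
    · rw [if_neg, show evalFrom (gaOp E) leaf f k = f k from rfl, h]
      rintro ⟨h1, _⟩
      exact h1 k le_rfl (by simp [size]) h
    · rw [if_pos, show evalFrom (gaOp E) leaf f k = f k from rfl]
      refine ⟨fun i hi1 hi2 => ?_, fun p c hm => by simp [edgesFrom] at hm⟩
      have : i = k := by simp [size] at hi2; omega
      subst this; exact h
  | node l r ihl ihr =>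
    intro f k
    have hls := size_pos l; have hrs := size_pos r
    show gaOp E (evalFrom (gaOp E) l f k) (evalFrom (gaOp E) r f (k + l.size)) = _
    by_cases hok : Ok E (node l r) f k
    · rw [if_pos hok]
      have hokl : Ok E l f k :=
        ⟨fun i h1 h2 => hok.1 i h1 (by simp only [size]; omega),
         fun p c hm => hok.2 p c (by simp [edgesFrom, hm])⟩
      have hokr : Ok E r f (k + l.size) :=
        ⟨fun i h1 h2 => hok.1 i (by omega) (by simp only [size]; omega),
         fun p c hm => hok.2 p c (by simp [edgesFrom, hm])⟩
      rw [ihl, ihr, if_pos hokl, if_pos hokr]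
      obtain ⟨x, y, hx, hy, hxy⟩ := hok.2 k (k + l.size) (by simp [edgesFrom])
      rw [hx, hy, gaOp_some_some, if_pos hxy]
    · rw [if_neg hok]
      by_cases hl : Ok E l f k
      · by_cases hr : Ok E r f (k + l.size)
        · rw [ihl, ihr, if_pos hl, if_pos hr]
          have hk : f k ≠ none := hl.1 k le_rfl (by omega)
          have hk2 : f (k + l.size) ≠ none := hr.1 _ le_rfl (by omega)
          obtain ⟨x, hx⟩ := Option.ne_none_iff_exists'.mp hk
          obtain ⟨y, hy⟩ := Option.ne_none_iff_exists'.mp hk2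
          have hxy : ¬ E x y := by
            intro hE
            apply hok
            constructor
            · intro i h1 h2
              by_cases hi : i < k + l.size
              · exact hl.1 i h1 hi
              · exact hr.1 i (by omega) (by simp only [size] at h2 ⊢; omega)
            · intro p c hm
              simp only [edgesFrom, List.mem_cons, List.mem_append] at hm
              rcases hm with heq | hm | hm
              · cases heq
                exact ⟨x, y, hx, hy, hE⟩
              · exact hl.2 p c hm
              · exact hr.2 p c hm
          rw [hx, hy, gaOp_some_some, if_neg hxy]
        · rw [ihr, if_neg hr, gaOp_none_right]
      · rw [ihl, if_neg hl, gaOp_none_left]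

open Classical in
lemma termOp_eq {V : Type*} (E : V → V → Prop) (t : BTree) (f : ℕ → Option V) :
    termOp (gaOp E) t f = if Ok E t f 0 then f 0 else none :=
  evalFrom_eq E t f 0

/-- Transfer of homomorphy along congruent-mod-2 depth sequences. -/
lemma ok_transfer {V : Type*} [Nonempty V] (E : V → V → Prop)
    (hsymm : ∀ u v, E u v → E v u)
    (hcomp : ∀ v : V,
      (scc E v = {v} ∧ ¬ E v v) ∨
      (∀ x ∈ scc E v, ∀ y ∈ scc E v, E x y) ∨
      IsCompleteBipartiteOn E (scc E v))
    {n : ℕ} (hn : 2 ≤ n) (t t' : BTree) (ht : t.size = n) (ht' : t'.size = n)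
    (hcong : ∀ i < n, t.depth i ≡ t'.depth i [MOD 2])
    (f : ℕ → Option V) (hok : Ok E t f 0) : Ok E t' f 0 := by
  classical
  obtain ⟨hnn, hedge⟩ := hok
  set g : ℕ → V := fun i => (f i).getD (Classical.arbitrary V) with hg
  have hfg : ∀ i < n, f i = some (g i) := by
    intro i hi
    have h := hnn i (Nat.zero_le _) (by omega)
    cases hfi : f i with
    | none => exact absurd hfi h
    | some a => simp [hg, hfi]
  have hedge' : ∀ p c, (p, c) ∈ t.edgesFrom 0 → E (g p) (g c) := by
    intro p c hm
    obtain ⟨x, y, hx, hy, hxy⟩ := hedge p c hm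
    obtain ⟨_, hpc, hcn, _⟩ := edge_spec t 0 p c hm
    have h1 : some (g p) = some x := (hfg p (by omega)).symm.trans hx
    have h2 : some (g c) = some y := (hfg c (by omega)).symm.trans hy
    rw [Option.some.injEq] at h1 h2
    rw [h1, h2]; exact hxy
  have hmem : ∀ c < n, g c ∈ scc E (g 0) := by
    intro c
    induction c using Nat.strong_induction_on with
    | _ c ih =>
      intro hcn
      rcases Nat.eq_zero_or_pos c with rfl | hc
      · exact ⟨Relation.ReflTransGen.refl, Relation.ReflTransGen.refl⟩
      · obtain ⟨p, hm⟩ := parent_exists t 0 c hc (by omega)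
        obtain ⟨_, hpc, _, _⟩ := edge_spec t 0 p c hm
        have hE := hedge' p c hm
        have hp := ih p hpc (by omega)
        exact ⟨Relation.ReflTransGen.head (hsymm _ _ hE) hp.1,
          Relation.ReflTransGen.tail hp.2 hE⟩
  rcases hcomp (g 0) with ⟨hscc, hloop⟩ | hfull | hbipc
  · exfalso
    obtain ⟨p, hm⟩ := parent_exists t 0 1 one_pos (by omega)
    obtain ⟨_, hp1, _, _⟩ := edge_spec t 0 p 1 hm
    have hp0 : p = 0 := by omega
    subst hp0
    have h1 : g 1 ∈ scc E (g 0) := hmem 1 (by omega)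
    rw [hscc] at h1
    have hEq : g 1 = g 0 := h1
    have hE := hedge' 0 1 hm
    rw [hEq] at hE
    exact hloop hE
  · refine ⟨fun i h1 h2 => hnn i h1 (by omega), fun p c hm => ?_⟩
    obtain ⟨_, hpc, hcn, _⟩ := edge_spec t' 0 p c hm
    exact ⟨g p, g c, hfg p (by omega), hfg c (by omega),
      hfull _ (hmem p (by omega)) _ (hmem c (by omega))⟩
  · obtain ⟨B1, B2, hne1, hne2, hunion, hdisj, hiff⟩ := hbipc
    have hK : ∀ x, x ∈ scc E (g 0) → (x ∈ B1 ∨ x ∈ B2) := by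
      intro x hx
      have : x ∈ B1 ∪ B2 := hunion ▸ hx
      exact this
    have hnot : ∀ x : V, ¬ (x ∈ B1 ∧ x ∈ B2) := by
      intro x hx
      have : x ∈ B1 ∩ B2 := ⟨hx.1, hx.2⟩
      rw [hdisj] at this
      exact this
    have hcross : ∀ x ∈ scc E (g 0), ∀ y ∈ scc E (g 0),
        (E x y ↔ ¬ (x ∈ B1 ↔ y ∈ B1)) := by
      intro x hx y hy
      rw [hiff x hx y hy]
      have h1 := hK x hx; have h2 := hK y hy
      have h3 := hnot x; have h4 := hnot y
      tauto
    have hP : ∀ c < n, ((g c ∈ B1) ↔ (Even (t.depth c) ↔ g 0 ∈ B1)) := by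
      intro c
      induction c using Nat.strong_induction_on with
      | _ c ih =>
        intro hcn
        rcases Nat.eq_zero_or_pos c with rfl | hc
        · rw [depth_zero]; simp [Nat.even_iff]
        · obtain ⟨p, hm⟩ := parent_exists t 0 c hc (by omega)
          obtain ⟨_, hpc, _, hd⟩ := edge_spec t 0 p c hm
          simp only [Nat.sub_zero] at hd
          have hE := hedge' p c hm
          have hx := (hcross (g p) (hmem p (by omega)) (g c) (hmem c (by omega))).mp hE
          have hih := ih p hpc (by omega)
          have hEv : Even (t.depth c) ↔ ¬ Even (t.depth p) := by
            rw [hd]; exact Nat.even_add_one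
          tauto
    refine ⟨fun i h1 h2 => hnn i h1 (by omega), fun p c hm => ?_⟩
    obtain ⟨_, hpc, hcn, hd⟩ := edge_spec t' 0 p c hm
    simp only [Nat.sub_zero] at hd
    refine ⟨g p, g c, hfg p (by omega), hfg c (by omega), ?_⟩
    rw [hcross (g p) (hmem p (by omega)) (g c) (hmem c (by omega))]
    have h1 := hP p (by omega); have h2 := hP c (by omega)
    have e1 : Even (t.depth p) ↔ Even (t'.depth p) := by
      have hc1 := hcong p (by omega)
      rw [Nat.even_iff, Nat.even_iff]
      unfold Nat.ModEq at hc1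
      omega
    have e2 : Even (t.depth c) ↔ Even (t'.depth c) := by
      have hc2 := hcong c (by omega)
      rw [Nat.even_iff, Nat.even_iff]
      unfold Nat.ModEq at hc2
      omega
    have e3 : Even (t'.depth c) ↔ ¬ Even (t'.depth p) := by
      rw [hd]; exact Nat.even_add_one
    tauto

/-- Part 1: the identity criterion. -/
lemma part1 {V : Type*} [Nonempty V] (E : V → V → Prop)
    (hsymm : ∀ u v, E u v → E v u)
    (hcomp : ∀ v : V,
      (scc E v = {v} ∧ ¬ E v v) ∨
      (∀ x ∈ scc E v, ∀ y ∈ scc E v, E x y) ∨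
      IsCompleteBipartiteOn E (scc E v))
    (hbip : ∃ v : V, IsCompleteBipartiteOn E (scc E v))
    (n : ℕ) (t t' : BTree) (ht : t.size = n) (ht' : t'.size = n) :
    Satisfies (gaOp E) t t' ↔ ∀ i < n, t.depth i ≡ t'.depth i [MOD 2] := by
  classical
  rcases lt_or_ge n 2 with hn | hn
  · have h1 := size_pos t
    have hn1 : n = 1 := by omega
    subst hn1
    have et : t = leaf := eq_leaf_of_size_eq_one t ht
    have et' : t' = leaf := eq_leaf_of_size_eq_one t' ht'
    subst et; subst et'
    constructor
    · intro _ i hi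
      exact Nat.ModEq.refl _
    · intro _ f; rfl
  · constructor
    · intro hsat
      obtain ⟨v, B1, B2, hne1, hne2, hunion, hdisj, hiff⟩ := hbip
      obtain ⟨b1, hb1⟩ := hne1; obtain ⟨b2, hb2⟩ := hne2
      have hb1K : b1 ∈ scc E v := hunion ▸ (Set.mem_union_left _ hb1)
      have hb2K : b2 ∈ scc E v := hunion ▸ (Set.mem_union_right _ hb2)
      have hb1n2 : b1 ∉ B2 := by
        intro h
        have : b1 ∈ B1 ∩ B2 := ⟨hb1, h⟩
        rw [hdisj] at this; exact this
      have hb2n1 : b2 ∉ B1 := by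
        intro h
        have : b2 ∈ B1 ∩ B2 := ⟨h, hb2⟩
        rw [hdisj] at this; exact this
      set f : ℕ → Option V := fun i => if t.depth i % 2 = 0 then some b1 else some b2
        with hf
      have hfp1 : ∀ i, t.depth i % 2 = 0 → f i = some b1 := by
        intro i h; simp [hf, h]
      have hfp2 : ∀ i, t.depth i % 2 ≠ 0 → f i = some b2 := by
        intro i h; simp [hf, h]
      have hOkt : Ok E t f 0 := by
        constructor
        · intro i _ _
          by_cases h : t.depth i % 2 = 0 <;> simp [hf, h]
        · intro p c hm
          obtain ⟨_, hpc, hcn, hd⟩ := edge_spec t 0 p c hm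
          simp only [Nat.sub_zero] at hd
          by_cases hp : t.depth p % 2 = 0
          · refine ⟨b1, b2, hfp1 p hp, hfp2 c (by omega), ?_⟩
            rw [hiff b1 hb1K b2 hb2K]
            exact Or.inl ⟨hb1, hb2⟩
          · refine ⟨b2, b1, hfp2 p hp, hfp1 c (by omega), ?_⟩
            rw [hiff b2 hb2K b1 hb1K]
            exact Or.inr ⟨hb2, hb1⟩
      have h1 : termOp (gaOp E) t f = some b1 := by
        rw [termOp_eq, if_pos hOkt]
        exact hfp1 0 (by rw [depth_zero])
      have h2 := hsat f
      have hOkt' : Ok E t' f 0 := by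
        by_contra h
        rw [h1, termOp_eq, if_neg h] at h2
        exact Option.some_ne_none b1 h2
      have hcol : ∀ p c, (p, c) ∈ t'.edgesFrom 0 → t.depth p % 2 ≠ t.depth c % 2 := by
        intro p c hm heq
        obtain ⟨x, y, hx, hy, hxy⟩ := hOkt'.2 p c hm
        by_cases hp : t.depth p % 2 = 0
        · have hc : t.depth c % 2 = 0 := by omega
          rw [hfp1 p hp, Option.some.injEq] at hx
          rw [hfp1 c hc, Option.some.injEq] at hy
          subst hx; subst hy
          rw [hiff b1 hb1K b1 hb1K] at hxy
          tauto
        · have hc : t.depth c % 2 ≠ 0 := by omega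
          rw [hfp2 p hp, Option.some.injEq] at hx
          rw [hfp2 c hc, Option.some.injEq] at hy
          subst hx; subst hy
          rw [hiff b2 hb2K b2 hb2K] at hxy
          tauto
      intro i hi
      have key : ∀ c, c < n → t.depth c % 2 = t'.depth c % 2 := by
        intro c
        induction c using Nat.strong_induction_on with
        | _ c ih =>
          intro hcn
          rcases Nat.eq_zero_or_pos c with rfl | hc
          · rw [depth_zero, depth_zero]
          · obtain ⟨p, hm⟩ := parent_exists t' 0 c hc (by omega)
            obtain ⟨_, hpc, _, hd⟩ := edge_spec t' 0 p c hm
            simp only [Nat.sub_zero] at hd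
            have h3 := hcol p c hm
            have h4 := ih p hpc (by omega)
            omega
      exact key i hi
    · intro hcong f
      rw [termOp_eq, termOp_eq]
      have h1 : Ok E t f 0 → Ok E t' f 0 :=
        ok_transfer E hsymm hcomp hn t t' ht ht' hcong f
      have h2 : Ok E t' f 0 → Ok E t f 0 :=
        ok_transfer E hsymm hcomp hn t' t ht' ht (fun i hi => (hcong i hi).symm) f
      by_cases h : Ok E t f 0
      · rw [if_pos h, if_pos (h1 h)]
      · rw [if_neg h, if_neg (fun h' => h (h2 h'))]

/-! ### Realizing parity sequences by bracketings -/

def chain : ℕ → BTree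
  | 0 => BTree.leaf
  | k + 1 => BTree.node (chain k) BTree.leaf

def buildAux : BTree → List ℕ → BTree
  | t, [] => t
  | t, k :: ks => buildAux (BTree.node t (chain k)) ks

def bwAux : List ℕ → List ℕ
  | [] => []
  | k :: ks => 1 :: (List.replicate k 2 ++ bwAux ks)

def blocks : List Bool → ℕ × List ℕ
  | [] => (0, [])
  | false :: w => ((blocks w).1 + 1, (blocks w).2)
  | true :: w => (0, (blocks w).1 :: (blocks w).2)

def TW (w : List Bool) : BTree :=
  buildAux (BTree.node BTree.leaf (chain (blocks w).1)) (blocks w).2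

lemma chain_depths (k : ℕ) : (chain k).depths = 0 :: List.replicate k 1 := by
  induction k with
  | zero => rfl
  | succ k ih =>
    show (BTree.node (chain k) BTree.leaf).depths = _
    rw [List.replicate_succ']
    simp [BTree.depths, ih]

lemma buildAux_depths (ks : List ℕ) :
    ∀ t : BTree, (buildAux t ks).depths = t.depths ++ bwAux ks := by
  induction ks with
  | nil => intro t; simp [buildAux, bwAux]
  | cons k ks ih =>
    intro t
    show (buildAux (BTree.node t (chain k)) ks).depths = _
    rw [ih]
    simp [BTree.depths, chain_depths, bwAux, List.map_replicate]

lemma TW_depths (w : List Bool) :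
    (TW w).depths = 0 :: 1 :: (w.map fun b => cond b 1 2) := by
  have h : ∀ w : List Bool,
      List.replicate (blocks w).1 2 ++ bwAux (blocks w).2
        = w.map fun b => cond b 1 2 := by
    intro w
    induction w with
    | nil => rfl
    | cons b w ih =>
      cases b
      · show List.replicate ((blocks w).1 + 1) 2 ++ bwAux (blocks w).2 = _
        rw [List.replicate_succ]
        simp [ih]
      · show List.replicate 0 2 ++ bwAux ((blocks w).1 :: (blocks w).2) = _
        simp only [List.replicate, List.nil_append, bwAux, List.map_cons]
        rw [ih]
        rfl
  unfold TW
  rw [buildAux_depths, ← h w]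
  simp [BTree.depths, chain_depths, List.map_replicate]

lemma TW_size (w : List Bool) : (TW w).size = w.length + 2 := by
  rw [← depths_length, TW_depths]
  simp

lemma TW_depth_zero (w : List Bool) : (TW w).depth 0 = 0 := depth_zero _

lemma TW_depth_one (w : List Bool) : (TW w).depth 1 = 1 := by
  simp [BTree.depth, TW_depths]

lemma TW_depth_two (w : List Bool) (j : ℕ) :
    (TW w).depth (j + 2) = (w.map fun b => cond b 1 2).getD j 0 := by
  simp only [BTree.depth, TW_depths]
  rw [show j + 2 = (j + 1) + 1 from rfl, List.getD_cons_succ, List.getD_cons_succ]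

lemma TW_ofFn_depth {m : ℕ} (v : Fin m → Bool) (j : ℕ) (hj : j < m) :
    (TW (List.ofFn v)).depth (j + 2) = cond (v ⟨j, hj⟩) 1 2 := by
  rw [TW_depth_two, List.map_ofFn,
    List.getD_eq_getElem _ _ (by simpa using hj), List.getElem_ofFn]
  rfl

end AssocSpec

open AssocSpec in
/-- If every connected component of an undirected graph `G` is
trivial, a complete graph with loops, or a complete bipartite graph, and the
last case occurs at least once, then `A(G)` satisfies a bracketing identity
`t ≈ t'` iff the depth sequences of `G(t)` and `G(t')` are congruent mod 2;
consequently `s_n(A(G)) = 2^(n-2)` for all `n ≥ 2`. -/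
theorem stmt1 {V : Type*} [Nonempty V] (E : V → V → Prop)
    (hsymm : ∀ u v, E u v → E v u)
    (hcomp : ∀ v : V,
      (scc E v = {v} ∧ ¬ E v v) ∨
      (∀ x ∈ scc E v, ∀ y ∈ scc E v, E x y) ∨
      IsCompleteBipartiteOn E (scc E v))
    (hbip : ∃ v : V, IsCompleteBipartiteOn E (scc E v)) :
    (∀ n : ℕ, ∀ t t' : BTree, t.size = n → t'.size = n →
      (Satisfies (gaOp E) t t' ↔ ∀ i < n, t.depth i ≡ t'.depth i [MOD 2])) ∧
    (∀ n : ℕ, 2 ≤ n → spectrum (gaOp E) n = 2 ^ (n - 2)) := by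
    classical
  have hp1 := fun (n : ℕ) (t t' : BTree) (ht : t.size = n) (ht' : t'.size = n) =>
    part1 E hsymm hcomp hbip n t t' ht ht'
  refine ⟨fun n t t' ht ht' => hp1 n t t' ht ht', ?_⟩
  intro n hn
  set S : Set ((ℕ → Option V) → Option V) :=
    {g | ∃ t : BTree, t.size = n ∧ g = BTree.termOp (gaOp E) t} with hS
  have hlen : ∀ v : Fin (n - 2) → Bool, (List.ofFn v).length = n - 2 := by
    intro v; simp
  have hsz : ∀ v : Fin (n - 2) → Bool, (TW (List.ofFn v)).size = n := by
    intro v; rw [TW_size, hlen]; omega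
  set F : (Fin (n - 2) → Bool) → ((ℕ → Option V) → Option V) :=
    fun v => BTree.termOp (gaOp E) (TW (List.ofFn v)) with hF
  have hFS : ∀ v, F v ∈ S := fun v => ⟨TW (List.ofFn v), hsz v, rfl⟩
  have hinj : Function.Injective F := by
    intro v v' h
    funext j
    have hsat : Satisfies (gaOp E) (TW (List.ofFn v)) (TW (List.ofFn v')) :=
      fun f => congrFun h f
    have hcong := (hp1 n _ _ (hsz v) (hsz v')).mp hsat ((j : ℕ) + 2) (by omega)
    rw [TW_ofFn_depth v j j.isLt, TW_ofFn_depth v' j j.isLt] at hcong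
    simp only [Fin.eta] at hcong
    unfold Nat.ModEq at hcong
    cases hv : v j <;> cases hv' : v' j
    · rfl
    · exfalso; rw [hv, hv'] at hcong; norm_num at hcong
    · exfalso; rw [hv, hv'] at hcong; norm_num at hcong
    · rfl
  have hsurj : ∀ g ∈ S, ∃ v, F v = g := by
    rintro g ⟨t, ht, rfl⟩
    refine ⟨fun j => decide (t.depth ((j : ℕ) + 2) % 2 = 1), ?_⟩
    have hsat : Satisfies (gaOp E) (TW (List.ofFn fun j : Fin (n - 2) =>
        decide (t.depth ((j : ℕ) + 2) % 2 = 1))) t := by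
      apply (hp1 n _ _ (hsz _) ht).mpr
      intro i hi
      match i, hi with
      | 0, _ =>
        rw [TW_depth_zero, BTree.depth_zero]
      | 1, _ =>
        rw [TW_depth_one, BTree.depth_one t (by omega)]
      | (j + 2), hj =>
        rw [TW_ofFn_depth _ j (by omega)]
        show _ % 2 = _ % 2
        simp only [Fin.val_mk]
        by_cases h : t.depth (j + 2) % 2 = 1
        · rw [decide_eq_true h]
          show (1 : ℕ) % 2 = _
          omega
        · rw [decide_eq_false h]
          show (2 : ℕ) % 2 = _
          omega
    funext f
    exact hsat f
  have hbij : Function.Bijective (fun v => (⟨F v, hFS v⟩ : S)) := by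
    constructor
    · intro a b hab
      exact hinj (congrArg Subtype.val hab)
    · rintro ⟨g, hg⟩
      obtain ⟨v, hv⟩ := hsurj g hg
      exact ⟨v, Subtype.ext hv⟩
  show Set.ncard S = 2 ^ (n - 2)
  rw [← Nat.card_coe_set_eq, ← Nat.card_eq_of_bijective _ hbij]
  simp [Nat.card_eq_fintype_card, Fintype.card_fun]
end

section
/- Let G be the digraph with vertex set V = {v, w} and edge set E = {(v,v), (v,w)}. Then the associative spectrum of the graph algebra A(G) satisfies s_n(A(G)) = 2^{n−2} for all n ≥ 2. -/
namespace AssocSpec7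

open AssocSpec AssocSpec.BTree

noncomputable def op2 : Option (Fin 2) → Option (Fin 2) → Option (Fin 2) :=
  gaOp (fun i j : Fin 2 => (i = 0 ∧ j = 0) ∨ (i = 0 ∧ j = 1))

open Classical

lemma op2_eq (a b : Option (Fin 2)) :
    op2 a b = if a = some 0 ∧ b ≠ none then some 0 else none := by
  rcases a with _ | x <;> rcases b with _ | y <;> simp [op2, gaOp]
  fin_cases x <;> fin_cases y <;> simp

/-- positions (from offset `k`) that must take value `0` for the product to
be nonzero -/
def mz : BTree → ℕ → Finset ℕ
  | .leaf, k => {k}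
  | .node l .leaf, k => mz l k
  | .node l (.node r1 r2), k => mz l k ∪ mz (.node r1 r2) (k + l.size)

/-- positions that must be `0` for the product to be defined (≠ ∞) -/
def mzZ : BTree → ℕ → Finset ℕ
  | .leaf, _ => ∅
  | .node l r, k => mz (.node l r) k

lemma mz_node (l r : BTree) (k : ℕ) :
    mz (.node l r) k = mz l k ∪ mzZ r (k + l.size) := by
  cases r <;> simp [mz, mzZ]

lemma size_pos (t : BTree) : 0 < t.size := by
  induction t with
  | leaf => simp [size]
  | node l r ihl ihr => simp only [size]; omega

lemma mz_bounds (t : BTree) : ∀ k i, i ∈ mz t k → k ≤ i ∧ i < k + t.size := by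
  induction t with
  | leaf => intro k i hi; simp [mz] at hi; simp [hi, size]
  | node l r ihl ihr =>
    intro k i hi
    rw [mz_node, Finset.mem_union] at hi
    have hs : (BTree.node l r).size = l.size + r.size := rfl
    rcases hi with hi | hi
    · have := ihl k i hi; omega
    · cases r with
      | leaf => simp [mzZ] at hi
      | node r1 r2 =>
        have := ihr (k + l.size) i hi
        simp only [size] at this ⊢
        omega

lemma mz_self (t : BTree) (k : ℕ) : k ∈ mz t k := by
  induction t generalizing k with
  | leaf => simp [mz]
  | node l r ihl ihr => rw [mz_node, Finset.mem_union]; exact Or.inl (ihl k)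

lemma mz_lt : ∀ (r l : BTree) (k i : ℕ), i ∈ mz (.node l r) k →
    i < k + l.size + r.size - 1 := by
  intro r
  induction r with
  | leaf =>
    intro l k i hi
    rw [mz_node] at hi
    simp [mzZ] at hi
    have := mz_bounds l k i hi
    simp [size]; omega
  | node r1 r2 ih1 ih2 =>
    intro l k i hi
    rw [mz_node, Finset.mem_union] at hi
    have h1 := size_pos r1
    have h2 := size_pos r2
    rcases hi with hi | hi
    · have := mz_bounds l k i hi; simp only [size]; omega
    · have := ih2 r1 (k + l.size) i hi
      simp only [size] at this ⊢
      omega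

open AssocSpec AssocSpec.BTree Classical

lemma eval_spec (t : BTree) (f : ℕ → Option (Fin 2)) : ∀ k,
    (evalFrom op2 t f k = some 0 ↔
      ((∀ i, k ≤ i → i < k + t.size → f i ≠ none) ∧ ∀ i ∈ mz t k, f i = some 0)) ∧
    (evalFrom op2 t f k ≠ none ↔
      ((∀ i, k ≤ i → i < k + t.size → f i ≠ none) ∧ ∀ i ∈ mzZ t k, f i = some 0)) := by
  induction t with
  | leaf =>
    intro k
    have he : evalFrom op2 BTree.leaf f k = f k := rfl
    constructor
    · rw [he]
      constructor
      · intro h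
        refine ⟨fun i h1 h2 => ?_, fun i hi => ?_⟩
        · have : i = k := by simp [size] at h2; omega
          simp [this, h]
        · simp [mz] at hi; simp [hi, h]
      · rintro ⟨-, h2⟩; exact h2 k (by simp [mz])
    · rw [he]
      constructor
      · intro h
        refine ⟨fun i h1 h2 => ?_, fun i hi => ?_⟩
        · have : i = k := by simp [size] at h2; omega
          simp [this, h]
        · simp [mzZ] at hi
      · rintro ⟨h1, -⟩; exact h1 k le_rfl (by simp [size])
  | node l r ihl ihr =>
    intro k
    have he : evalFrom op2 (BTree.node l r) f k =
        op2 (evalFrom op2 l f k) (evalFrom op2 r f (k + l.size)) := rfl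
    rw [he, op2_eq]
    have key : (evalFrom op2 l f k = some 0 ∧ evalFrom op2 r f (k + l.size) ≠ none) ↔
        ((∀ i, k ≤ i → i < k + (BTree.node l r).size → f i ≠ none) ∧
          ∀ i ∈ mz (BTree.node l r) k, f i = some 0) := by
      rw [(ihl k).1, (ihr (k + l.size)).2]
      have hs : (BTree.node l r).size = l.size + r.size := rfl
      rw [mz_node]
      constructor
      · rintro ⟨⟨a1, a2⟩, b1, b2⟩
        refine ⟨fun i h1 h2 => ?_, fun i hi => ?_⟩
        · by_cases hc : i < k + l.size
          · exact a1 i h1 hc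
          · exact b1 i (by omega) (by simp [hs] at h2; omega)
        · rw [Finset.mem_union] at hi
          rcases hi with hi | hi
          · exact a2 i hi
          · exact b2 i hi
      · rintro ⟨h1, h2⟩
        refine ⟨⟨fun i hi1 hi2 => h1 i hi1 (by simp [hs]; omega),
            fun i hi => h2 i (Finset.mem_union_left _ hi)⟩,
          ⟨fun i hi1 hi2 => h1 i (by omega) (by simp [hs]; omega),
            fun i hi => h2 i (Finset.mem_union_right _ hi)⟩⟩
    have hzz : mzZ (BTree.node l r) k = mz (BTree.node l r) k := rfl
    rw [hzz]
    constructor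
    · rw [← key]; split <;> simp_all
    · rw [← key]; split <;> simp_all

lemma eval_node_eq (l r : BTree) (f : ℕ → Option (Fin 2)) (k : ℕ) :
    evalFrom op2 (BTree.node l r) f k =
      if ((∀ i, k ≤ i → i < k + (BTree.node l r).size → f i ≠ none) ∧
          ∀ i ∈ mz (BTree.node l r) k, f i = some 0) then some 0 else none := by
  by_cases h : ((∀ i, k ≤ i → i < k + (BTree.node l r).size → f i ≠ none) ∧
      ∀ i ∈ mz (BTree.node l r) k, f i = some 0)
  · rw [if_pos h]; exact (eval_spec (BTree.node l r) f k).1.mpr h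
  · rw [if_neg h]
    by_contra hne
    exact h ((eval_spec (BTree.node l r) f k).2.mp hne)

noncomputable def Fop (n : ℕ) (S : Finset ℕ) : (ℕ → Option (Fin 2)) → Option (Fin 2) :=
  fun f => if ((∀ i < n, f i ≠ none) ∧ ∀ i ∈ S, f i = some 0) then some 0 else none

lemma termOp_node (n : ℕ) (l r : BTree) (ht : (BTree.node l r).size = n) :
    termOp op2 (BTree.node l r) = Fop n (mz (BTree.node l r) 0) := by
  funext f
  show evalFrom op2 (BTree.node l r) f 0 = _
  rw [eval_node_eq, Fop]
  refine if_congr ⟨?_, ?_⟩ rfl rfl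
  · rintro ⟨h1, h2⟩; exact ⟨fun i hi => h1 i (Nat.zero_le _) (by omega), h2⟩
  · rintro ⟨h1, h2⟩; exact ⟨fun i _ hi => h1 i (by omega), h2⟩

open AssocSpec AssocSpec.BTree Classical

/-- replace the rightmost leaf by a node with two leaves -/
def rext : BTree → BTree
  | .leaf => .node .leaf .leaf
  | .node l r => .node l (rext r)

lemma rext_size (t : BTree) : (rext t).size = t.size + 1 := by
  induction t with
  | leaf => rfl
  | node l r ihl ihr => show l.size + (rext r).size = l.size + r.size + 1; omega

lemma rext_is_node (t : BTree) : ∃ a b, rext t = .node a b := by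
  cases t with
  | leaf => exact ⟨_, _, rfl⟩
  | node l r => exact ⟨_, _, rfl⟩

lemma rext_mz (t : BTree) : ∀ k, mz (rext t) k = mz t k ∪ {k + t.size - 1} := by
  induction t with
  | leaf =>
    intro k
    show mz (.node .leaf .leaf) k = _
    rw [mz_node]
    simp [mz, mzZ, size]
  | node l r ihl ihr =>
    intro k
    show mz (.node l (rext r)) k = _
    obtain ⟨a, b, hab⟩ := rext_is_node r
    have h1 : mz (.node l (rext r)) k = mz l k ∪ mz (rext r) (k + l.size) := by
      rw [mz_node, hab]; rfl
    rw [h1, ihr, mz_node]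
    have hrp := size_pos r
    have hs : (BTree.node l r).size = l.size + r.size := rfl
    have harith : k + l.size + r.size - 1 = k + (BTree.node l r).size - 1 := by
      rw [hs]; omega
    cases r with
    | leaf =>
      simp [mz, mzZ, size, Finset.union_assoc]
    | node r1 r2 =>
      have : mzZ (.node r1 r2) (k + l.size) = mz (.node r1 r2) (k + l.size) := rfl
      rw [this, Finset.union_assoc, harith]

def build : ℕ → (ℕ → Bool) → BTree
  | 0, _ => .node .leaf .leaf
  | m + 1, c => if c (m + 1) then rext (build m c) else .node (build m c) .leaf

lemma build_size (m : ℕ) (c : ℕ → Bool) : (build m c).size = m + 2 := by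
  induction m with
  | zero => rfl
  | succ m ih =>
    show (if c (m + 1) then rext (build m c) else .node (build m c) .leaf).size = _
    split
    · rw [rext_size, ih]
    · show (build m c).size + BTree.size .leaf = _
      rw [ih]; rfl

lemma build_is_node (m : ℕ) (c : ℕ → Bool) : ∃ a b, build m c = .node a b := by
  cases m with
  | zero => exact ⟨_, _, rfl⟩
  | succ m =>
    show ∃ a b, (if c (m + 1) then rext (build m c) else .node (build m c) .leaf) = _
    split
    · exact rext_is_node _
    · exact ⟨_, _, rfl⟩

lemma build_mz (m : ℕ) (c : ℕ → Bool) (i : ℕ) :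
    i ∈ mz (build m c) 0 ↔ i = 0 ∨ (1 ≤ i ∧ i ≤ m ∧ c i = true) := by
  induction m with
  | zero =>
    show i ∈ mz (.node .leaf .leaf) 0 ↔ _
    rw [mz_node]
    simp [mz, mzZ]
    omega
  | succ m ih =>
    show i ∈ mz (if c (m + 1) then rext (build m c) else .node (build m c) .leaf) 0 ↔ _
    by_cases hc : c (m + 1) = true
    · rw [if_pos hc, rext_mz, build_size]
      simp only [Finset.mem_union, Finset.mem_singleton, ih]
      have : 0 + (m + 2) - 1 = m + 1 := by omega
      rw [this]
      constructor
      · rintro ((rfl | ⟨h1, h2, h3⟩) | rfl)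
        · exact Or.inl rfl
        · exact Or.inr ⟨h1, by omega, h3⟩
        · exact Or.inr ⟨by omega, le_rfl, hc⟩
      · rintro (rfl | ⟨h1, h2, h3⟩)
        · exact Or.inl (Or.inl rfl)
        · rcases Nat.lt_or_ge i (m + 1) with h | h
          · exact Or.inl (Or.inr ⟨h1, by omega, h3⟩)
          · exact Or.inr (by omega)
    · rw [if_neg hc]
      have : mz (.node (build m c) .leaf) 0 = mz (build m c) 0 := by
        rw [mz_node]; simp [mzZ]
      rw [this, ih]
      constructor
      · rintro (rfl | ⟨h1, h2, h3⟩)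
        · exact Or.inl rfl
        · exact Or.inr ⟨h1, by omega, h3⟩
      · rintro (rfl | ⟨h1, h2, h3⟩)
        · exact Or.inl rfl
        · have : i ≠ m + 1 := by rintro rfl; exact hc h3
          exact Or.inr ⟨h1, by omega, h3⟩

lemma Fop_inj (n : ℕ) (S1 S2 : Finset ℕ) (h : Fop n S1 = Fop n S2) : S1 = S2 := by
  have key : ∀ T1 T2 : Finset ℕ, Fop n T1 = Fop n T2 → T2 ⊆ T1 := by
    intro T1 T2 hT i hi
    set f : ℕ → Option (Fin 2) := fun j => if j ∈ T1 then some 0 else some 1 with hf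
    have h1 : Fop n T1 f = some 0 := by
      rw [Fop]
      refine if_pos ⟨fun j _ => ?_, fun j hj => ?_⟩
      · by_cases hj1 : j ∈ T1 <;> simp [hf, hj1]
      · simp [hf, hj]
    rw [hT] at h1
    rw [Fop] at h1
    by_cases hcond : ((∀ j < n, f j ≠ none) ∧ ∀ j ∈ T2, f j = some 0)
    · have := hcond.2 i hi
      rw [hf] at this
      by_contra hni
      simp [hni] at this
    · rw [if_neg hcond] at h1; simp at h1
  exact Finset.Subset.antisymm (key S2 S1 h.symm) (key S1 S2 h)

open AssocSpec AssocSpec.BTree Classical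

lemma insert_zero_inj {S1 S2 : Finset ℕ} (h1 : S1 ⊆ Finset.Ico 1 (n - 1))
    (h2 : S2 ⊆ Finset.Ico 1 (n - 1)) (h : insert 0 S1 = insert 0 S2) : S1 ⊆ S2 := by
  intro a ha
  have hmem : a ∈ insert 0 S2 := by rw [← h]; exact Finset.mem_insert_of_mem ha
  rcases Finset.mem_insert.mp hmem with rfl | hm
  · have := h1 ha
    simp [Finset.mem_Ico] at this
  · exact hm

lemma main (n : ℕ) (hn : 2 ≤ n) : spectrum op2 n = 2 ^ (n - 2) := by
  have hset : {g : (ℕ → Option (Fin 2)) → Option (Fin 2) |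
      ∃ t : BTree, t.size = n ∧ g = termOp op2 t} =
      (fun S => Fop n (insert 0 S)) '' ↑((Finset.Ico 1 (n - 1)).powerset) := by
    ext g
    simp only [Set.mem_setOf_eq, Set.mem_image, Finset.mem_coe, Finset.mem_powerset]
    constructor
    · rintro ⟨t, ht, rfl⟩
      cases t with
      | leaf => exfalso; simp [size] at ht; omega
      | node l r =>
        have hs : (BTree.node l r).size = l.size + r.size := rfl
        refine ⟨(mz (.node l r) 0).erase 0, ?_, ?_⟩
        · intro i hi
          rw [Finset.mem_erase] at hi
          have hb := mz_lt r l 0 i hi.2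
          rw [Finset.mem_Ico]
          have := hi.1
          omega
        · rw [Finset.insert_erase (mz_self _ 0)]
          exact (termOp_node n l r ht).symm
    · rintro ⟨S, hS, rfl⟩
      set c : ℕ → Bool := fun i => decide (i ∈ S) with hc
      refine ⟨build (n - 2) c, ?_, ?_⟩
      · rw [build_size]; omega
      · obtain ⟨a, b, hab⟩ := build_is_node (n - 2) c
        have hsz : (BTree.node a b).size = n := by rw [← hab, build_size]; omega
        have hmzeq : mz (build (n - 2) c) 0 = insert 0 S := by
          apply Finset.ext
          intro i
          rw [build_mz]
          simp only [Finset.mem_insert, hc, decide_eq_true_eq]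
          constructor
          · rintro (rfl | ⟨h1, h2, h3⟩)
            · exact Or.inl rfl
            · exact Or.inr h3
          · rintro (rfl | hi)
            · exact Or.inl rfl
            · have := hS hi
              rw [Finset.mem_Ico] at this
              exact Or.inr ⟨this.1, by omega, hi⟩
        rw [hab, termOp_node n a b hsz, ← hab, hmzeq]
  have hinj : Set.InjOn (fun S => Fop n (insert 0 S))
      ↑((Finset.Ico 1 (n - 1)).powerset) := by
    intro S1 h1 S2 h2' heq
    simp only [Finset.mem_coe, Finset.mem_powerset] at h1 h2'
    have hi := Fop_inj n _ _ heq
    exact Finset.Subset.antisymm (insert_zero_inj h1 h2' hi) (insert_zero_inj h2' h1 hi.symm)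
  unfold AssocSpec.spectrum
  rw [hset, Set.ncard_image_of_injOn hinj, Set.ncard_coe_finset,
    Finset.card_powerset, Nat.card_Ico]
  have hnn : n - 1 - 1 = n - 2 := by omega
  rw [hnn]

end AssocSpec7

open AssocSpec in
/-- For the digraph on vertices `{v, w}` (here `v = 0`,
`w = 1`) with edges `{(v,v), (v,w)}`, the associative spectrum satisfies
`s_n = 2^(n-2)` for all `n ≥ 2`. -/
theorem stmt7 (n : ℕ) (hn : 2 ≤ n) :
    spectrum (gaOp (fun i j : Fin 2 =>
      (i = 0 ∧ j = 0) ∨ (i = 0 ∧ j = 1))) n = 2 ^ (n - 2) := by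
  exact AssocSpec7.main n hn
end
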